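/- Let L = (S, Act, →) be a labelled transition system, σ a path in L, φ and φ' ACTL state formulas, and χ, χ' action formulas. Then L,σ ⊨ φ _χU_χ' φ' if and only if ks'(L), ks'(σ) ⊨ ((F ∧ ks'(φ)) ∨ (¬F ∧ χ)) U (¬F ∧ ∃((¬F ∧ χ') U (F ∧ ks'(φ')))). -/
import Mathlib


/-!
Statement 7: the until case of the truth-preservation theorem for the mapping `ks'`
from ACTL to CTL.
-/

namespace Stmt7

/-- A path in a labelled transition system with transition relation `Tr ⊆ S × Act × S`. -/
structure LPath {S Act : Type} (Tr : S → Act → S → Prop) where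
  states : ℕ → S
  acts : ℕ → Act
  valid : ∀ n, Tr (states n) (acts n) (states (n + 1))

/-- A path in a Kripke structure with transition relation `R ⊆ S × S`. -/
structure KPath {S : Type} (R : S → S → Prop) where
  states : ℕ → S
  valid : ∀ n, R (states n) (states (n + 1))

/-- Action formulas over `Act`: boolean combinations of actions. -/
inductive AForm (Act : Type) : Type
  | tt : AForm Act
  | atom : Act → AForm Act
  | neg : AForm Act → AForm Act
  | and : AForm Act → AForm Act → AForm Act

/-- Satisfaction of an action formula by an action. -/
def asatA {Act : Type} : AForm Act → Act → Prop
  | .tt, _ => True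
  | .atom b, a => a = b
  | .neg χ, a => ¬ asatA χ a
  | .and χ χ', a => asatA χ a ∧ asatA χ' a

mutual
/-- ACTL state formulas over actions `Act`: `φ ::= true | ¬φ | φ∧φ' | ∃π`. -/
inductive ASF (Act : Type) : Type
  | tt : ASF Act
  | neg : ASF Act → ASF Act
  | and : ASF Act → ASF Act → ASF Act
  | ex : APF Act → ASF Act

/-- ACTL path formulas over actions `Act`:
`π ::= X_χ φ | φ _χU_χ' φ' | φ _χW_χ' φ'`. -/
inductive APF (Act : Type) : Type
  | anext : AForm Act → ASF Act → APF Act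
  | unt : ASF Act → AForm Act → AForm Act → ASF Act → APF Act
  | wunt : ASF Act → AForm Act → AForm Act → ASF Act → APF Act
end

mutual
/-- Satisfaction of ACTL state formulas at a state of an LTS. -/
def asatS {S Act : Type} (Tr : S → Act → S → Prop) : ASF Act → S → Prop
  | .tt, _ => True
  | .neg φ, s => ¬ asatS Tr φ s
  | .and φ ψ, s => asatS Tr φ s ∧ asatS Tr ψ s
  | .ex π, s => ∃ σ : LPath Tr, σ.states 0 = s ∧ asatP Tr π σ

/-- Satisfaction of ACTL path formulas on a path of an LTS.
`X_χ φ` holds iff the first transition satisfies `χ` and its target satisfies `φ`;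
`φ _χU_χ' φ'` holds iff at some later position the incoming transition satisfies `χ'`
and the state satisfies `φ'`, while all earlier states satisfy `φ` and all earlier
transitions satisfy `χ`; `φ _χW_χ' φ'` is the weak variant. -/
def asatP {S Act : Type} (Tr : S → Act → S → Prop) : APF Act → LPath Tr → Prop
  | .anext χ φ, σ => asatA χ (σ.acts 0) ∧ asatS Tr φ (σ.states 1)
  | .unt φ χ χ' φ', σ =>
      ∃ j, asatA χ' (σ.acts j) ∧ asatS Tr φ' (σ.states (j + 1)) ∧
        (∀ i ≤ j, asatS Tr φ (σ.states i)) ∧ (∀ i < j, asatA χ (σ.acts i))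
  | .wunt φ χ χ' φ', σ =>
      (∃ j, asatA χ' (σ.acts j) ∧ asatS Tr φ' (σ.states (j + 1)) ∧
        (∀ i ≤ j, asatS Tr φ (σ.states i)) ∧ (∀ i < j, asatA χ (σ.acts i))) ∨
      (∀ i, asatS Tr φ (σ.states i) ∧ asatA χ (σ.acts i))
end

mutual
/-- CTL state formulas over atomic propositions `AP`: `φ ::= true | p | ¬φ | φ∧φ' | ∃π`. -/
inductive CSF (AP : Type) : Type
  | tt : CSF AP
  | atom : AP → CSF AP
  | neg : CSF AP → CSF AP
  | and : CSF AP → CSF AP → CSF AP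
  | ex : CPF AP → CSF AP

/-- CTL path formulas over atomic propositions `AP`: `π ::= Xφ | φ U φ' | φ W φ'`. -/
inductive CPF (AP : Type) : Type
  | next : CSF AP → CPF AP
  | unt : CSF AP → CSF AP → CPF AP
  | wunt : CSF AP → CSF AP → CPF AP
end

/-- Disjunction of CTL state formulas, expressed with `¬` and `∧`. -/
def CSF.or {AP : Type} (φ ψ : CSF AP) : CSF AP := .neg (.and (.neg φ) (.neg ψ))

mutual
/-- Satisfaction of CTL state formulas at a state of a Kripke structure. -/
def csatS {S AP : Type} (R : S → S → Prop) (Lab : S → Set AP) : CSF AP → S → Prop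
  | .tt, _ => True
  | .atom p, s => p ∈ Lab s
  | .neg φ, s => ¬ csatS R Lab φ s
  | .and φ ψ, s => csatS R Lab φ s ∧ csatS R Lab ψ s
  | .ex π, s => ∃ σ : KPath R, σ.states 0 = s ∧ csatP R Lab π σ

/-- Satisfaction of CTL path formulas on a path of a Kripke structure (standard
semantics; `W` is the weak until). -/
def csatP {S AP : Type} (R : S → S → Prop) (Lab : S → Set AP) : CPF AP → KPath R → Prop
  | .next φ, σ => csatS R Lab φ (σ.states 1)
  | .unt φ φ', σ =>
      ∃ j, csatS R Lab φ' (σ.states j) ∧ ∀ i < j, csatS R Lab φ (σ.states i)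
  | .wunt φ φ', σ =>
      (∃ j, csatS R Lab φ' (σ.states j) ∧ ∀ i < j, csatS R Lab φ (σ.states i)) ∨
      (∀ i, csatS R Lab φ (σ.states i))
end

section ksConstruction

variable {S Act : Type} (Tr : S → Act → S → Prop)

/-- States of the Kripke structure `ks'(L)`: the states of `L` together with one fresh
state for each transition of `L`. -/
abbrev KState := S ⊕ {t : S × Act × S // Tr t.1 t.2.1 t.2.2}

/-- The fresh atomic proposition `F` (the atomic propositions of `ks'(L)` are `Act ∪ {F}`). -/
def Fprop (Act : Type) : Act ⊕ Unit := Sum.inr ()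

/-- Transitions of `ks'(L)`: for every transition `(s₀, α, s₁)` of `L`, the new state
`(s₀, α, s₁)` sits between `s₀` and `s₁`. -/
def KTrans : KState Tr → KState Tr → Prop
  | .inl s, .inr t => t.1.1 = s
  | .inr t, .inl s => t.1.2.2 = s
  | _, _ => False

/-- Labelling of `ks'(L)`: original states are labelled `{F}`, the state corresponding
to a transition `(s₀, α, s₁)` is labelled `{α}`. -/
def KLab : KState Tr → Set (Act ⊕ Unit)
  | .inl _ => {Sum.inr ()}
  | .inr t => {Sum.inl t.1.2.1}

/-- The path `ks'(σ)` in `ks'(L)` induced by a path `σ` in `L`: between consecutive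
states of `σ` the corresponding transition-state is inserted. -/
def ksPath (σ : LPath Tr) : KPath (KTrans Tr) where
  states n :=
    if n % 2 = 0 then Sum.inl (σ.states (n / 2))
    else Sum.inr ⟨(σ.states (n / 2), σ.acts (n / 2), σ.states (n / 2 + 1)), σ.valid (n / 2)⟩
  valid n := by
    rcases Nat.even_or_odd n with ⟨k, hk⟩ | ⟨k, hk⟩
    · have h1 : n % 2 = 0 := by omega
      have h2 : ¬ (n + 1) % 2 = 0 := by omega
      have h3 : (n + 1) / 2 = n / 2 := by omega
      simp only [h1, h2, if_true, if_false, h3, KTrans]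
    · have h1 : ¬ n % 2 = 0 := by omega
      have h2 : (n + 1) % 2 = 0 := by omega
      have h3 : (n + 1) / 2 = n / 2 + 1 := by omega
      simp only [h1, h2, if_true, if_false, h3, KTrans]

end ksConstruction

/-- The atomic proposition `F`, as a CTL state formula. -/
def Fsf (Act : Type) : CSF (Act ⊕ Unit) := .atom (Fprop Act)

/-- Reinterpretation of an action formula `χ` as a CTL state formula over `Act ∪ {F}`
(actions are reused as atomic propositions). -/
def aform {Act : Type} : AForm Act → CSF (Act ⊕ Unit)
  | .tt => .tt
  | .atom a => .atom (Sum.inl a)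
  | .neg χ => .neg (aform χ)
  | .and χ χ' => .and (aform χ) (aform χ')

mutual
/-- The translation `ks'` from ACTL state formulas to CTL state formulas. -/
def ksS {Act : Type} : ASF Act → CSF (Act ⊕ Unit)
  | .tt => .tt
  | .neg φ => .neg (ksS φ)
  | .and φ ψ => .and (ksS φ) (ksS ψ)
  | .ex π => .ex (ksP π)

/-- The translation `ks'` from ACTL path formulas to CTL path formulas:
`ks'(X_χ φ) = X(¬F ∧ χ ∧ ∃X(F ∧ ks'(φ)))`,
`ks'(φ _χU_χ' φ') = ((F ∧ ks'(φ)) ∨ (¬F ∧ χ)) U (¬F ∧ ∃((¬F ∧ χ') U (F ∧ ks'(φ'))))`,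
and analogously with `W` for the weak until. -/
def ksP {Act : Type} : APF Act → CPF (Act ⊕ Unit)
  | .anext χ φ =>
      .next (.and (.neg (Fsf Act))
        (.and (aform χ) (.ex (.next (.and (Fsf Act) (ksS φ))))))
  | .unt φ χ χ' φ' =>
      .unt (CSF.or (.and (Fsf Act) (ksS φ)) (.and (.neg (Fsf Act)) (aform χ)))
        (.and (.neg (Fsf Act))
          (.ex (.unt (.and (.neg (Fsf Act)) (aform χ')) (.and (Fsf Act) (ksS φ')))))
  | .wunt φ χ χ' φ' =>
      .wunt (CSF.or (.and (Fsf Act) (ksS φ)) (.and (.neg (Fsf Act)) (aform χ)))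
        (.and (.neg (Fsf Act))
          (.ex (.unt (.and (.neg (Fsf Act)) (aform χ')) (.and (Fsf Act) (ksS φ')))))
end

/-! ### Auxiliary machinery -/

lemma kpath_eq {T : Type} {R : T → T → Prop} {τ₁ τ₂ : KPath R} (h : τ₁.states = τ₂.states) :
    τ₁ = τ₂ := by
  cases τ₁; cases τ₂; simp_all

/-- Drop the first `k` states of a Kripke path. -/
def KPath.drop {T : Type} {R : T → T → Prop} (τ : KPath R) (k : ℕ) : KPath R where
  states n := τ.states (n + k)
  valid n := by simpa [Nat.add_right_comm] using τ.valid (n + k)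

section Aux

variable {S Act : Type} {Tr : S → Act → S → Prop}

lemma F_inl (s : S) : csatS (KTrans Tr) (KLab Tr) (Fsf Act) (Sum.inl s) := by
  simp [csatS, Fsf, Fprop, KLab]

lemma F_inr (t : {t : S × Act × S // Tr t.1 t.2.1 t.2.2}) :
    ¬ csatS (KTrans Tr) (KLab Tr) (Fsf Act) (Sum.inr t) := by
  simp [csatS, Fsf, Fprop, KLab]

lemma or_iff {T AP : Type} (R : T → T → Prop) (Lab : T → Set AP) (a b : CSF AP) (s : T) :
    csatS R Lab (CSF.or a b) s ↔ csatS R Lab a s ∨ csatS R Lab b s := by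
  simp only [CSF.or, csatS]; tauto

lemma aform_iff (χ : AForm Act) (t : {t : S × Act × S // Tr t.1 t.2.1 t.2.2}) :
    csatS (KTrans Tr) (KLab Tr) (aform χ) (Sum.inr t) ↔ asatA χ t.1.2.1 := by
  induction χ with
  | tt => simp [aform, csatS, asatA]
  | atom a => simp [aform, csatS, asatA, KLab, eq_comm]
  | neg χ ih => simp [aform, csatS, asatA, ih]
  | and χ χ' ih ih' => simp [aform, csatS, asatA, ih, ih']

lemma ksPath_even (σ : LPath Tr) (k : ℕ) :
    (ksPath Tr σ).states (2 * k) = Sum.inl (σ.states k) := by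
  have h1 : (2 * k) % 2 = 0 := by omega
  have h2 : (2 * k) / 2 = k := by omega
  simp [ksPath, h1, h2]

lemma ksPath_odd (σ : LPath Tr) (k : ℕ) :
    (ksPath Tr σ).states (2 * k + 1) =
      Sum.inr ⟨(σ.states k, σ.acts k, σ.states (k + 1)), σ.valid k⟩ := by
  have h1 : ¬ (2 * k + 1) % 2 = 0 := by omega
  have h2 : (2 * k + 1) / 2 = k := by omega
  simp [ksPath, h1, h2]

lemma step_inl {s : S} {y : KState Tr} (h : KTrans Tr (Sum.inl s) y) :
    ∃ t, y = Sum.inr t ∧ t.1.1 = s := by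
  cases y with
  | inl s' => exact h.elim
  | inr t => exact ⟨t, rfl, h⟩

lemma step_inr {t : {t : S × Act × S // Tr t.1 t.2.1 t.2.2}} {y : KState Tr}
    (h : KTrans Tr (Sum.inr t) y) : y = Sum.inl t.1.2.2 := by
  cases y with
  | inl s' => exact congrArg Sum.inl (show t.1.2.2 = s' from h).symm
  | inr t' => exact h.elim

lemma reconstruct {τ : KPath (KTrans Tr)} {s : S} (h0 : τ.states 0 = Sum.inl s) :
    ∃ σ : LPath Tr, σ.states 0 = s ∧ τ = ksPath Tr σ := by
  have E : ∀ n, ∃ s', τ.states (2 * n) = Sum.inl s' := by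
    intro n
    induction n with
    | zero => exact ⟨s, h0⟩
    | succ k ih =>
      obtain ⟨s', hs'⟩ := ih
      have h1 := τ.valid (2 * k)
      rw [hs'] at h1
      obtain ⟨t, ht, -⟩ := step_inl h1
      have h2 := τ.valid (2 * k + 1)
      rw [ht] at h2
      have h3 := step_inr h2
      exact ⟨t.1.2.2, by rw [show 2 * (k + 1) = 2 * k + 1 + 1 by ring, h3]⟩
  choose es hes using E
  have T : ∀ n, ∃ t : {t : S × Act × S // Tr t.1 t.2.1 t.2.2},
      τ.states (2 * n + 1) = Sum.inr t ∧ t.1.1 = es n ∧ t.1.2.2 = es (n + 1) := by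
    intro n
    have h1 := τ.valid (2 * n)
    rw [hes n] at h1
    obtain ⟨t, ht, htt⟩ := step_inl h1
    refine ⟨t, ht, htt, ?_⟩
    have h2 := τ.valid (2 * n + 1)
    rw [ht] at h2
    have h3 := step_inr h2
    have h4 := hes (n + 1)
    rw [show 2 * (n + 1) = 2 * n + 1 + 1 by ring, h3] at h4
    exact Sum.inl_injective h4
  choose ft h1 h2 h3 using T
  refine ⟨⟨es, fun n => (ft n).1.2.1, fun n => ?_⟩, ?_, ?_⟩
  · rw [← h2 n, ← h3 n]; exact (ft n).2
  · exact Sum.inl_injective ((by simpa using hes 0 : τ.states 0 = Sum.inl (es 0)).symm.trans h0)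
  · apply kpath_eq
    funext n
    obtain ⟨k, rfl | rfl⟩ : ∃ k, n = 2 * k ∨ n = 2 * k + 1 := ⟨n / 2, by omega⟩
    · rw [ksPath_even]; exact hes k
    · rw [ksPath_odd, h1 k]
      refine congrArg Sum.inr (Subtype.ext ?_)
      show (ft k).1 = (es k, (ft k).1.2.1, es (k + 1))
      rw [← h2 k, ← h3 k]

lemma ex_until_inr (t : {t : S × Act × S // Tr t.1 t.2.1 t.2.2}) (χ' : AForm Act)
    (ψ : CSF (Act ⊕ Unit))
    (hex : ∃ τ : KPath (KTrans Tr), τ.states 0 = Sum.inr t) :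
    csatS (KTrans Tr) (KLab Tr)
      (.ex (.unt (.and (.neg (Fsf Act)) (aform χ')) (.and (Fsf Act) ψ))) (Sum.inr t) ↔
    asatA χ' t.1.2.1 ∧ csatS (KTrans Tr) (KLab Tr) ψ (Sum.inl t.1.2.2) := by
  constructor
  · rintro ⟨τ, h0, hP⟩
    obtain ⟨j, hj, hlt⟩ : ∃ j, csatS (KTrans Tr) (KLab Tr) (.and (Fsf Act) ψ) (τ.states j) ∧
        ∀ i < j, csatS (KTrans Tr) (KLab Tr) (.and (.neg (Fsf Act)) (aform χ')) (τ.states i) := hP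
    have hτ1 : τ.states 1 = Sum.inl t.1.2.2 := step_inr (h0 ▸ τ.valid 0)
    have hj0 : j ≠ 0 := by
      rintro rfl; rw [h0] at hj; exact F_inr t hj.1
    have hj1 : j = 1 := by
      by_contra hne
      have h1lt : 1 < j := by omega
      have := (hlt 1 h1lt).1
      rw [hτ1] at this
      exact this (F_inl _)
    subst hj1
    rw [hτ1] at hj
    have hi0 := hlt 0 (by omega)
    rw [h0] at hi0
    exact ⟨(aform_iff χ' t).mp hi0.2, hj.2⟩
  · rintro ⟨hχ, hψ⟩
    obtain ⟨τ, h0⟩ := hex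
    have hτ1 : τ.states 1 = Sum.inl t.1.2.2 := step_inr (h0 ▸ τ.valid 0)
    refine ⟨τ, h0, 1, ?_, ?_⟩
    · rw [hτ1]; exact ⟨F_inl _, hψ⟩
    · intro i hi
      interval_cases i
      rw [h0]
      exact ⟨F_inr t, (aform_iff χ' t).mpr hχ⟩

lemma ex_next_inr (t : {t : S × Act × S // Tr t.1 t.2.1 t.2.2}) (ψ : CSF (Act ⊕ Unit))
    (hex : ∃ τ : KPath (KTrans Tr), τ.states 0 = Sum.inr t) :
    csatS (KTrans Tr) (KLab Tr) (.ex (.next (.and (Fsf Act) ψ))) (Sum.inr t) ↔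
    csatS (KTrans Tr) (KLab Tr) ψ (Sum.inl t.1.2.2) := by
  constructor
  · rintro ⟨τ, h0, h1⟩
    have hτ1 : τ.states 1 = Sum.inl t.1.2.2 := step_inr (h0 ▸ τ.valid 0)
    have h1' : csatS (KTrans Tr) (KLab Tr) (.and (Fsf Act) ψ) (τ.states 1) := h1
    rw [hτ1] at h1'
    exact h1'.2
  · intro hψ
    obtain ⟨τ, h0⟩ := hex
    have hτ1 : τ.states 1 = Sum.inl t.1.2.2 := step_inr (h0 ▸ τ.valid 0)
    refine ⟨τ, h0, ?_⟩
    show csatS (KTrans Tr) (KLab Tr) (.and (Fsf Act) ψ) (τ.states 1)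
    rw [hτ1]
    exact ⟨F_inl _, hψ⟩

lemma drop_odd (σ : LPath Tr) (j : ℕ) :
    ∃ τ : KPath (KTrans Tr), τ.states 0 =
      Sum.inr ⟨(σ.states j, σ.acts j, σ.states (j + 1)), σ.valid j⟩ := by
  refine ⟨(ksPath Tr σ).drop (2 * j + 1), ?_⟩
  show (ksPath Tr σ).states (0 + (2 * j + 1)) = _
  rw [Nat.zero_add, ksPath_odd]

lemma until_kripke (σ : LPath Tr) (ψ ψ' : CSF (Act ⊕ Unit)) (χ χ' : AForm Act) :
    csatP (KTrans Tr) (KLab Tr)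
      (.unt (CSF.or (.and (Fsf Act) ψ) (.and (.neg (Fsf Act)) (aform χ)))
        (.and (.neg (Fsf Act))
          (.ex (.unt (.and (.neg (Fsf Act)) (aform χ')) (.and (Fsf Act) ψ')))))
      (ksPath Tr σ) ↔
    ∃ j, asatA χ' (σ.acts j) ∧ csatS (KTrans Tr) (KLab Tr) ψ' (Sum.inl (σ.states (j + 1))) ∧
      (∀ i ≤ j, csatS (KTrans Tr) (KLab Tr) ψ (Sum.inl (σ.states i))) ∧
      (∀ i < j, asatA χ (σ.acts i)) := by
  constructor
  · rintro ⟨J, hJ, hlt⟩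
    obtain ⟨j, rfl | rfl⟩ : ∃ j, J = 2 * j ∨ J = 2 * j + 1 := ⟨J / 2, by omega⟩
    · rw [ksPath_even] at hJ; exact absurd (F_inl (σ.states j)) hJ.1
    · rw [ksPath_odd] at hJ
      have hinner := (ex_until_inr _ χ' ψ' (drop_odd σ j)).mp hJ.2
      refine ⟨j, hinner.1, hinner.2, ?_, ?_⟩
      · intro i hi
        have := hlt (2 * i) (by omega)
        rw [ksPath_even, or_iff] at this
        rcases this with h | h
        · exact h.2
        · exact absurd (F_inl (σ.states i)) h.1
      · intro i hi
        have := hlt (2 * i + 1) (by omega)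
        rw [ksPath_odd, or_iff] at this
        rcases this with h | h
        · exact absurd h.1 (F_inr _)
        · exact (aform_iff χ _).mp h.2
  · rintro ⟨j, hχ', hψ', hψ, hχ⟩
    refine ⟨2 * j + 1, ?_, ?_⟩
    · rw [ksPath_odd]
      exact ⟨F_inr _, (ex_until_inr _ χ' ψ' (drop_odd σ j)).mpr ⟨hχ', hψ'⟩⟩
    · intro I hI
      obtain ⟨i, rfl | rfl⟩ : ∃ i, I = 2 * i ∨ I = 2 * i + 1 := ⟨I / 2, by omega⟩
      · rw [ksPath_even, or_iff]
        exact Or.inl ⟨F_inl _, hψ i (by omega)⟩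
      · rw [ksPath_odd, or_iff]
        exact Or.inr ⟨F_inr _, (aform_iff χ _).mpr (hχ i (by omega))⟩

lemma always_kripke (σ : LPath Tr) (ψ : CSF (Act ⊕ Unit)) (χ : AForm Act) :
    (∀ I, csatS (KTrans Tr) (KLab Tr)
        (CSF.or (.and (Fsf Act) ψ) (.and (.neg (Fsf Act)) (aform χ)))
        ((ksPath Tr σ).states I)) ↔
    ∀ i, csatS (KTrans Tr) (KLab Tr) ψ (Sum.inl (σ.states i)) ∧ asatA χ (σ.acts i) := by
  constructor
  · intro h i
    constructor
    · have := h (2 * i)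
      rw [ksPath_even, or_iff] at this
      rcases this with h' | h'
      · exact h'.2
      · exact absurd (F_inl _) h'.1
    · have := h (2 * i + 1)
      rw [ksPath_odd, or_iff] at this
      rcases this with h' | h'
      · exact absurd h'.1 (F_inr _)
      · exact (aform_iff χ _).mp h'.2
  · intro h I
    obtain ⟨i, rfl | rfl⟩ : ∃ i, I = 2 * i ∨ I = 2 * i + 1 := ⟨I / 2, by omega⟩
    · rw [ksPath_even, or_iff]; exact Or.inl ⟨F_inl _, (h i).1⟩
    · rw [ksPath_odd, or_iff]; exact Or.inr ⟨F_inr _, (aform_iff χ _).mpr (h i).2⟩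

end Aux

mutual

theorem satS_iff {S Act : Type} (Tr : S → Act → S → Prop) (φ : ASF Act) (s : S) :
    asatS Tr φ s ↔ csatS (KTrans Tr) (KLab Tr) (ksS φ) (Sum.inl s) := by
  match φ with
  | .tt => simp [asatS, ksS, csatS]
  | .neg φ =>
    simp only [asatS, ksS, csatS]
    rw [satS_iff Tr φ s]
  | .and φ ψ =>
    simp only [asatS, ksS, csatS]
    rw [satS_iff Tr φ s, satS_iff Tr ψ s]
  | .ex π =>
    show (∃ σ : LPath Tr, σ.states 0 = s ∧ asatP Tr π σ) ↔
      csatS (KTrans Tr) (KLab Tr) (.ex (ksP π)) (Sum.inl s)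
    constructor
    · rintro ⟨σ, hs, hπ⟩
      refine ⟨ksPath Tr σ, ?_, (satP_iff Tr π σ).mp hπ⟩
      have h00 : (ksPath Tr σ).states 0 = Sum.inl (σ.states 0) := by
        simpa using ksPath_even σ 0
      rw [h00, hs]
    · rintro ⟨τ, h0, hπ⟩
      obtain ⟨σ, hs, rfl⟩ := reconstruct h0
      exact ⟨σ, hs, (satP_iff Tr π σ).mpr hπ⟩

theorem satP_iff {S Act : Type} (Tr : S → Act → S → Prop) (π : APF Act) (σ : LPath Tr) :
    asatP Tr π σ ↔ csatP (KTrans Tr) (KLab Tr) (ksP π) (ksPath Tr σ) := by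
  match π with
  | .anext χ φ =>
    show asatA χ (σ.acts 0) ∧ asatS Tr φ (σ.states 1) ↔
      csatS (KTrans Tr) (KLab Tr)
        (.and (.neg (Fsf Act)) (.and (aform χ) (.ex (.next (.and (Fsf Act) (ksS φ))))))
        ((ksPath Tr σ).states 1)
    have h1 : (ksPath Tr σ).states 1 =
        Sum.inr ⟨(σ.states 0, σ.acts 0, σ.states 1), σ.valid 0⟩ := by
      simpa using ksPath_odd σ 0
    rw [h1]
    have hd := drop_odd σ 0
    constructor
    · rintro ⟨hχ, hφ⟩
      exact ⟨F_inr _, (aform_iff χ _).mpr hχ,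
        (ex_next_inr _ (ksS φ) hd).mpr ((satS_iff Tr φ _).mp hφ)⟩
    · rintro ⟨-, hχ, hφ⟩
      exact ⟨(aform_iff χ _).mp hχ,
        (satS_iff Tr φ _).mpr ((ex_next_inr _ (ksS φ) hd).mp hφ)⟩
  | .unt φ χ χ' φ' =>
    show (∃ j, asatA χ' (σ.acts j) ∧ asatS Tr φ' (σ.states (j + 1)) ∧
        (∀ i ≤ j, asatS Tr φ (σ.states i)) ∧ (∀ i < j, asatA χ (σ.acts i))) ↔ _
    rw [show ksP (.unt φ χ χ' φ') =
        .unt (CSF.or (.and (Fsf Act) (ksS φ)) (.and (.neg (Fsf Act)) (aform χ)))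
          (.and (.neg (Fsf Act))
            (.ex (.unt (.and (.neg (Fsf Act)) (aform χ')) (.and (Fsf Act) (ksS φ')))))
      from rfl]
    rw [until_kripke σ (ksS φ) (ksS φ') χ χ']
    constructor
    · rintro ⟨j, h1, h2, h3, h4⟩
      exact ⟨j, h1, (satS_iff Tr φ' _).mp h2, fun i hi => (satS_iff Tr φ _).mp (h3 i hi), h4⟩
    · rintro ⟨j, h1, h2, h3, h4⟩
      exact ⟨j, h1, (satS_iff Tr φ' _).mpr h2, fun i hi => (satS_iff Tr φ _).mpr (h3 i hi), h4⟩
  | .wunt φ χ χ' φ' =>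
    show (∃ j, asatA χ' (σ.acts j) ∧ asatS Tr φ' (σ.states (j + 1)) ∧
        (∀ i ≤ j, asatS Tr φ (σ.states i)) ∧ (∀ i < j, asatA χ (σ.acts i))) ∨
        (∀ i, asatS Tr φ (σ.states i) ∧ asatA χ (σ.acts i)) ↔ _
    rw [show ksP (.wunt φ χ χ' φ') =
        .wunt (CSF.or (.and (Fsf Act) (ksS φ)) (.and (.neg (Fsf Act)) (aform χ)))
          (.and (.neg (Fsf Act))
            (.ex (.unt (.and (.neg (Fsf Act)) (aform χ')) (.and (Fsf Act) (ksS φ')))))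
      from rfl]
    show _ ↔ (∃ j, _ ∧ ∀ i < j, _) ∨ (∀ i, _)
    rw [show (∃ j, csatS (KTrans Tr) (KLab Tr)
          (.and (.neg (Fsf Act))
            (.ex (.unt (.and (.neg (Fsf Act)) (aform χ')) (.and (Fsf Act) (ksS φ')))))
          ((ksPath Tr σ).states j) ∧
        ∀ i < j, csatS (KTrans Tr) (KLab Tr)
          (CSF.or (.and (Fsf Act) (ksS φ)) (.and (.neg (Fsf Act)) (aform χ)))
          ((ksPath Tr σ).states i)) =
      csatP (KTrans Tr) (KLab Tr)
        (.unt (CSF.or (.and (Fsf Act) (ksS φ)) (.and (.neg (Fsf Act)) (aform χ)))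
          (.and (.neg (Fsf Act))
            (.ex (.unt (.and (.neg (Fsf Act)) (aform χ')) (.and (Fsf Act) (ksS φ'))))))
        (ksPath Tr σ) from rfl]
    rw [until_kripke σ (ksS φ) (ksS φ') χ χ', always_kripke σ (ksS φ) χ]
    constructor
    · rintro (⟨j, h1, h2, h3, h4⟩ | h)
      · exact Or.inl ⟨j, h1, (satS_iff Tr φ' _).mp h2,
          fun i hi => (satS_iff Tr φ _).mp (h3 i hi), h4⟩
      · exact Or.inr fun i => ⟨(satS_iff Tr φ _).mp (h i).1, (h i).2⟩
    · rintro (⟨j, h1, h2, h3, h4⟩ | h)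
      · exact Or.inl ⟨j, h1, (satS_iff Tr φ' _).mpr h2,
          fun i hi => (satS_iff Tr φ _).mpr (h3 i hi), h4⟩
      · exact Or.inr fun i => ⟨(satS_iff Tr φ _).mpr (h i).1, (h i).2⟩

end

/-- Let `L` be an LTS, `σ` a path in `L`, `φ, φ'` ACTL state formulas,
and `χ, χ'` action formulas. Then
`L,σ ⊨ φ _χU_χ' φ'` iff
`ks'(L), ks'(σ) ⊨ ((F ∧ ks'(φ)) ∨ (¬F ∧ χ)) U (¬F ∧ ∃((¬F ∧ χ') U (F ∧ ks'(φ'))))`. -/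
theorem ks'_preserves_until {S Act : Type} (Tr : S → Act → S → Prop) (σ : LPath Tr)
    (φ φ' : ASF Act) (χ χ' : AForm Act) :
    asatP Tr (.unt φ χ χ' φ') σ ↔
      csatP (KTrans Tr) (KLab Tr)
        (.unt (CSF.or (.and (Fsf Act) (ksS φ)) (.and (.neg (Fsf Act)) (aform χ)))
          (.and (.neg (Fsf Act))
            (.ex (.unt (.and (.neg (Fsf Act)) (aform χ')) (.and (Fsf Act) (ksS φ'))))))
        (ksPath Tr σ) := by
  exact satP_iff Tr (.unt φ χ χ' φ') σ

end Stmt7
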